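/- For every graph G without isolated vertices, the Staller-pass game total domination number satisfies γ_g^t^{sp}(G) ≤ γ_g^t(G) + 1, where in the Staller-pass game Staller is allowed to pass one move (the pass is not counted as a move). -/
import Mathlib


open Finset

open scoped Classical

variable {V : Type*} [Fintype V]

/-- The set of neighbors of `v` (the vertices that `v` totally dominates). -/
noncomputable def nbr (G : SimpleGraph V) (v : V) : Finset V :=
  Finset.univ.filter (G.Adj v)

/-- The legal moves, given that the vertices of `D` are already totally dominated:
a vertex is playable iff it totally dominates at least one vertex outside `D`. -/
noncomputable def movesF (G : SimpleGraph V) (D : Finset V) : Finset V :=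
  Finset.univ.filter fun v => ¬ nbr G v ⊆ D

lemma movesF_card (G : SimpleGraph V) (D : Finset V) {v : V} (hv : v ∈ movesF G D) :
    ((univ : Finset V) \ (D ∪ nbr G v)).card < ((univ : Finset V) \ D).card := by
  simp only [movesF, mem_filter] at hv
  obtain ⟨u, hu, hu2⟩ := Finset.not_subset.mp hv.2
  apply Finset.card_lt_card
  constructor
  · exact Finset.sdiff_subset_sdiff le_rfl Finset.subset_union_left
  · intro hsub
    have h1 : u ∈ (univ : Finset V) \ D := by simp [hu2]
    have h2 := hsub h1
    simp only [mem_sdiff, mem_univ, true_and, Finset.mem_union] at h2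
    exact h2 (Or.inr hu)

/-- Optimal number of moves in the total domination game on `G` with the vertices of `D`
already totally dominated; `turn = true` means Dominator (the minimizer) moves next,
`turn = false` means Staller (the maximizer) moves next.  The game ends when no legal
move remains (for graphs without isolated vertices this means every vertex is totally
dominated). -/
noncomputable def gtVal (G : SimpleGraph V) (turn : Bool) (D : Finset V) : ℕ :=
  if h : (movesF G D).Nonempty then
    if turn then
      1 + ((movesF G D).attach.inf' (by simpa using h)
        fun v => gtVal G false (D ∪ nbr G v.1))
    else
      1 + ((movesF G D).attach.sup' (by simpa using h)
        fun v => gtVal G true (D ∪ nbr G v.1))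
  else 0
termination_by ((univ : Finset V) \ D).card
decreasing_by
  · exact movesF_card G D v.2
  · exact movesF_card G D v.2

/-- The game total domination number `γ_g^t(G|D)` (Dominator-start, `D` predominated). -/
noncomputable def gtD (G : SimpleGraph V) (D : Finset V := ∅) : ℕ := gtVal G true D

/-- The Staller-start game total domination number `γ_g^t'(G|D)`. -/
noncomputable def gtS (G : SimpleGraph V) (D : Finset V := ∅) : ℕ := gtVal G false D

/-- `G` has no isolated vertices. -/
def NoIsolated (G : SimpleGraph V) : Prop := ∀ v : V, ∃ w, G.Adj v w

/-- Optimal number of moves in the Staller-pass total domination game: as `gtVal`, but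
if `canPass = true` then Staller may, once during the game, pass instead of moving
(the pass is not counted as a move). -/
noncomputable def gtValSP (G : SimpleGraph V) (turn : Bool) (canPass : Bool)
    (D : Finset V) : ℕ :=
  if h : (movesF G D).Nonempty then
    match turn, canPass with
    | true, canPass =>
      1 + ((movesF G D).attach.inf' (by simpa using h)
        fun v => gtValSP G false canPass (D ∪ nbr G v.1))
    | false, true =>
      max (gtValSP G true false D)
        (1 + ((movesF G D).attach.sup' (by simpa using h)
          fun v => gtValSP G true true (D ∪ nbr G v.1)))
    | false, false =>
      1 + ((movesF G D).attach.sup' (by simpa using h)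
        fun v => gtValSP G true false (D ∪ nbr G v.1))
  else 0
termination_by 2 * ((univ : Finset V) \ D).card + (if canPass then 1 else 0)
decreasing_by
  all_goals first
    | (have := movesF_card G D v.2; split <;> omega)
    | (simp only [if_pos, if_neg, Bool.false_eq_true, if_true, if_false]; omega)


section Aux

variable (G : SimpleGraph V)

lemma gtVal_true_eq (D : Finset V) (h : (movesF G D).Nonempty) :
    gtVal G true D = 1 + ((movesF G D).attach.inf' (by simpa using h)
      fun v => gtVal G false (D ∪ nbr G v.1)) := by
  rw [gtVal]; simp [h]

lemma gtVal_false_eq (D : Finset V) (h : (movesF G D).Nonempty) :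
    gtVal G false D = 1 + ((movesF G D).attach.sup' (by simpa using h)
      fun v => gtVal G true (D ∪ nbr G v.1)) := by
  rw [gtVal]; simp [h]

lemma gtVal_of_empty (t : Bool) (D : Finset V) (h : ¬ (movesF G D).Nonempty) :
    gtVal G t D = 0 := by
  rw [gtVal]; simp [h]

lemma gtValSP_true_eq (cp : Bool) (D : Finset V) (h : (movesF G D).Nonempty) :
    gtValSP G true cp D = 1 + ((movesF G D).attach.inf' (by simpa using h)
      fun v => gtValSP G false cp (D ∪ nbr G v.1)) := by
  rw [gtValSP]; simp [h]

lemma gtValSP_ff_eq (D : Finset V) (h : (movesF G D).Nonempty) :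
    gtValSP G false false D = 1 + ((movesF G D).attach.sup' (by simpa using h)
      fun v => gtValSP G true false (D ∪ nbr G v.1)) := by
  rw [gtValSP]; simp [h]

lemma gtValSP_ft_eq (D : Finset V) (h : (movesF G D).Nonempty) :
    gtValSP G false true D = max (gtValSP G true false D)
        (1 + ((movesF G D).attach.sup' (by simpa using h)
          fun v => gtValSP G true true (D ∪ nbr G v.1))) := by
  rw [gtValSP]; simp [h]

lemma gtValSP_of_empty (t cp : Bool) (D : Finset V) (h : ¬ (movesF G D).Nonempty) :
    gtValSP G t cp D = 0 := by
  rw [gtValSP]; simp [h]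

lemma gtVal_true_le (D : Finset V) {v : V} (hv : v ∈ movesF G D) :
    gtVal G true D ≤ 1 + gtVal G false (D ∪ nbr G v) := by
  rw [gtVal_true_eq G D ⟨v, hv⟩]
  apply Nat.add_le_add_left
  exact Finset.inf'_le _ (Finset.mem_attach _ ⟨v, hv⟩)

lemma gtVal_false_le (D : Finset V) {v : V} (hv : v ∈ movesF G D) :
    1 + gtVal G true (D ∪ nbr G v) ≤ gtVal G false D := by
  rw [gtVal_false_eq G D ⟨v, hv⟩]
  apply Nat.add_le_add_left
  exact Finset.le_sup' (fun w : {x // x ∈ movesF G D} => gtVal G true (D ∪ nbr G w.1))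
    (Finset.mem_attach _ ⟨v, hv⟩)

lemma gtVal_true_exists (D : Finset V) (h : (movesF G D).Nonempty) :
    ∃ v ∈ movesF G D, gtVal G true D = 1 + gtVal G false (D ∪ nbr G v) := by
  rw [gtVal_true_eq G D h]
  obtain ⟨v, -, hveq⟩ := Finset.exists_mem_eq_inf' (s := (movesF G D).attach) (by simpa using h)
    (fun w : {x // x ∈ movesF G D} => gtVal G false (D ∪ nbr G w.1))
  exact ⟨v.1, v.2, by rw [hveq]⟩

lemma gtVal_false_exists (D : Finset V) (h : (movesF G D).Nonempty) :
    ∃ v ∈ movesF G D, gtVal G false D = 1 + gtVal G true (D ∪ nbr G v) := by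
  rw [gtVal_false_eq G D h]
  obtain ⟨v, -, hveq⟩ := Finset.exists_mem_eq_sup' (s := (movesF G D).attach) (by simpa using h)
    (fun w : {x // x ∈ movesF G D} => gtVal G true (D ∪ nbr G w.1))
  exact ⟨v.1, v.2, by rw [hveq]⟩

lemma gtValSP_true_le (cp : Bool) (D : Finset V) {v : V} (hv : v ∈ movesF G D) :
    gtValSP G true cp D ≤ 1 + gtValSP G false cp (D ∪ nbr G v) := by
  rw [gtValSP_true_eq G cp D ⟨v, hv⟩]
  apply Nat.add_le_add_left
  exact Finset.inf'_le _ (Finset.mem_attach _ ⟨v, hv⟩)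

lemma movesF_anti {A B : Finset V} (h : A ⊆ B) : movesF G B ⊆ movesF G A := by
  intro v hv
  simp only [movesF, mem_filter, mem_univ, true_and] at hv ⊢
  exact fun hc => hv (hc.trans h)

lemma movesF_eq_empty {D : Finset V} (h : ((univ : Finset V) \ D).card = 0) :
    movesF G D = ∅ := by
  have hD : ∀ u : V, u ∈ D := by
    intro u; by_contra hu
    have hmem : u ∈ (univ : Finset V) \ D := by simp [hu]
    rw [Finset.card_eq_zero] at h
    rw [h] at hmem
    simp at hmem
  ext v
  simp only [movesF, mem_filter, mem_univ, true_and, Finset.notMem_empty, iff_false, not_not]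
  exact fun x _ => hD x

lemma continuation :
    ∀ n (A : Finset V), ((univ : Finset V) \ A).card ≤ n →
      (∀ B, A ⊆ B → gtVal G true B ≤ gtVal G true A) ∧
      (∀ B, A ⊆ B → gtVal G false B ≤ gtVal G false A) ∧
      (∀ B, A ⊆ B → gtVal G true B ≤ gtVal G false A + 1) ∧
      (∀ B, A ⊆ B → gtVal G false B ≤ gtVal G true A + 1) := by
  intro n
  induction n with
  | zero =>
    intro A hA
    have hAe : movesF G A = ∅ := movesF_eq_empty G (Nat.le_zero.mp hA)
    have hBval : ∀ (t : Bool) B, A ⊆ B → gtVal G t B = 0 := by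
      intro t B hAB
      have : movesF G B = ∅ :=
        Finset.subset_empty.mp (hAe ▸ movesF_anti G hAB)
      exact gtVal_of_empty G t B (by simp [this])
    have hAval : ∀ t : Bool, gtVal G t A = 0 := fun t => hBval t A subset_rfl
    refine ⟨?_, ?_, ?_, ?_⟩ <;> intro B hAB <;> simp [hBval _ B hAB, hAval]
  | succ n ih =>
    intro A hA
    have hM1 : ∀ B, A ⊆ B → gtVal G true B ≤ gtVal G true A := by
      intro B hAB
      by_cases hB : (movesF G B).Nonempty
      · have hAne : (movesF G A).Nonempty := by
          obtain ⟨v0, hv0⟩ := hB; exact ⟨v0, movesF_anti G hAB hv0⟩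
        obtain ⟨v, hvA, hAeq⟩ := gtVal_true_exists G A hAne
        have hcard := movesF_card G A hvA
        have IH4 := ih (A ∪ nbr G v) (by omega)
        by_cases hvB : v ∈ movesF G B
        · have h1 := gtVal_true_le G B hvB
          have h2 : gtVal G false (B ∪ nbr G v) ≤ gtVal G false (A ∪ nbr G v) :=
            IH4.2.1 _ (Finset.union_subset_union hAB le_rfl)
          omega
        · have hsub : nbr G v ⊆ B := by
            simpa [movesF] using hvB
          have h3 : gtVal G true B ≤ gtVal G false (A ∪ nbr G v) + 1 :=
            IH4.2.2.1 B (Finset.union_subset hAB hsub)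
          omega
      · rw [gtVal_of_empty G true B hB]; omega
    refine ⟨hM1, ?_, ?_, ?_⟩
    · -- M2
      intro B hAB
      by_cases hB : (movesF G B).Nonempty
      · obtain ⟨v, hvB, hBeq⟩ := gtVal_false_exists G B hB
        have hvA := movesF_anti G hAB hvB
        have hcard := movesF_card G A hvA
        have h1 := gtVal_false_le G A hvA
        have h2 : gtVal G true (B ∪ nbr G v) ≤ gtVal G true (A ∪ nbr G v) :=
          (ih (A ∪ nbr G v) (by omega)).1 _ (Finset.union_subset_union hAB le_rfl)
        omega
      · rw [gtVal_of_empty G false B hB]; omega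
    · -- M3
      intro B hAB
      by_cases hB : (movesF G B).Nonempty
      · obtain ⟨v, hvB⟩ := hB
        have hvA := movesF_anti G hAB hvB
        have hcard := movesF_card G A hvA
        have h1 := gtVal_true_le G B hvB
        have h2 : gtVal G false (B ∪ nbr G v) ≤ gtVal G true (A ∪ nbr G v) + 1 :=
          (ih (A ∪ nbr G v) (by omega)).2.2.2 _ (Finset.union_subset_union hAB le_rfl)
        have h3 := gtVal_false_le G A hvA
        omega
      · rw [gtVal_of_empty G true B hB]; omega
    · -- M4
      intro B hAB
      by_cases hB : (movesF G B).Nonempty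
      · obtain ⟨v, hvB, hBeq⟩ := gtVal_false_exists G B hB
        have h1 : gtVal G true (B ∪ nbr G v) ≤ gtVal G true A :=
          hM1 _ (hAB.trans Finset.subset_union_left)
        omega
      · rw [gtVal_of_empty G false B hB]; omega

lemma sp_main :
    ∀ n (D : Finset V), ((univ : Finset V) \ D).card ≤ n →
      (gtValSP G true false D = gtVal G true D) ∧
      (gtValSP G false false D = gtVal G false D) ∧
      (gtValSP G true true D ≤ gtVal G true D + 1) ∧
      (gtValSP G false true D ≤ gtVal G false D + 1) := by
  intro n
  induction n with
  | zero =>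
    intro D hD
    have hDe : ¬ (movesF G D).Nonempty := by
      simp [movesF_eq_empty G (Nat.le_zero.mp hD)]
    simp [gtVal_of_empty G _ D hDe, gtValSP_of_empty G _ _ D hDe]
  | succ n ih =>
    intro D hD
    have hE1 : gtValSP G true false D = gtVal G true D := by
      by_cases hne : (movesF G D).Nonempty
      · rw [gtValSP_true_eq G false D hne, gtVal_true_eq G D hne]
        congr 1
        refine Finset.inf'_congr _ rfl (fun v hv => ?_)
        have hcard := movesF_card G D v.2
        exact (ih (D ∪ nbr G v.1) (by omega)).2.1
      · rw [gtVal_of_empty G true D hne, gtValSP_of_empty G true false D hne]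
    have hE2 : gtValSP G false false D = gtVal G false D := by
      by_cases hne : (movesF G D).Nonempty
      · rw [gtValSP_ff_eq G D hne, gtVal_false_eq G D hne]
        congr 1
        refine Finset.sup'_congr _ rfl (fun v hv => ?_)
        have hcard := movesF_card G D v.2
        exact (ih (D ∪ nbr G v.1) (by omega)).1
      · rw [gtVal_of_empty G false D hne, gtValSP_of_empty G false false D hne]
    refine ⟨hE1, hE2, ?_, ?_⟩
    · by_cases hne : (movesF G D).Nonempty
      · obtain ⟨v, hv, heq⟩ := gtVal_true_exists G D hne
        have hcard := movesF_card G D hv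
        have h1 := gtValSP_true_le G true D hv
        have h2 : gtValSP G false true (D ∪ nbr G v) ≤ gtVal G false (D ∪ nbr G v) + 1 :=
          (ih (D ∪ nbr G v) (by omega)).2.2.2
        omega
      · rw [gtValSP_of_empty G true true D hne]; omega
    · by_cases hne : (movesF G D).Nonempty
      · rw [gtValSP_ft_eq G D hne]
        apply max_le
        · rw [hE1]
          exact (continuation G _ D le_rfl).2.2.1 D subset_rfl
        · refine le_trans (Nat.add_le_add_left
            (Finset.sup'_le (a := gtVal G false D) _ _ fun v hv => ?_) 1) (by omega)
          have hcard := movesF_card G D v.2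
          have h1 : gtValSP G true true (D ∪ nbr G v.1) ≤ gtVal G true (D ∪ nbr G v.1) + 1 :=
            (ih (D ∪ nbr G v.1) (by omega)).2.2.1
          have h2 := gtVal_false_le G D v.2
          omega
      · rw [gtValSP_of_empty G false true D hne]; omega

end Aux

/-- For every graph `G` without isolated vertices,
`γ_g^t^{sp}(G) ≤ γ_g^t(G) + 1`. -/
theorem stallerPass_le {V : Type*} [Fintype V] (G : SimpleGraph V) (hG : NoIsolated G) :
    gtValSP G true true ∅ ≤ gtD G ∅ + 1 := by
  have h := (sp_main G ((univ : Finset V) \ (∅ : Finset V)).card ∅ le_rfl).2.2.1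
  simpa [gtD] using h
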